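/- arXiv:2409.06465 — 2 statements merged into one kernel-verified Lean document; each statement's English description precedes it below -/
import Mathlib

section
/- Let {X_n}_n be a sequence of Hermitian matrices with X_n of order d_n, d_n → ∞. Let P_n ∈ ℂ^{d_n×d_n'} be a compression matrix with d_n' < d_n and P_n* P_n = I_{d_n'}, and set Y_{d_n'} = P_n* X_n P_n. If liminf_{n→∞} d_n'/d_n > 0 and {X_n}_n ∼_λ α I_s for a real constant α (i.e. {X_n}_n is distributed in the eigenvalue sense as the constant s×s matrix α I_s), then {Y_{d_n'}}_n ∼_λ α I_s. -/
open MeasureTheory Filter Topology Matrix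
open scoped Real

noncomputable section

/-- Sum of `F` over the eigenvalues (with multiplicity) of a square complex matrix,
the eigenvalues being the roots of the characteristic polynomial. -/
def eigSum {ι : Type*} [Fintype ι] [DecidableEq ι] (F : ℂ → ℂ) (A : Matrix ι ι ℂ) : ℂ :=
  (A.charpoly.roots.map F).sum

/-- Sum of `F` over the singular values `σ_1, …, σ_{min(#rows,#cols)}` of a rectangular
complex matrix: the singular values are the square roots of the eigenvalues of `A * Aᴴ`,
discarding the `#rows - min(#rows,#cols)` superfluous zero ones. -/
def svSum {m n : Type*} [Fintype m] [Fintype n] [DecidableEq m]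
    (F : ℝ → ℂ) (A : Matrix m n ℂ) : ℂ :=
  (∑ i, F (Real.sqrt ((Matrix.isHermitian_mul_conjTranspose_self A).eigenvalues i))) -
    ((Fintype.card m - min (Fintype.card m) (Fintype.card n) : ℕ) : ℂ) * F 0

/-- `{A_n}_n ∼_σ f` : the matrix-sequence `A` is distributed as the matrix-valued
symbol `f : Ω → ℂ^{ρ×τ}` in the sense of the singular values (Weyl sense). -/
def DistributedSV {Θ : Type*} [MeasureSpace Θ] (Ω : Set Θ)
    {ρ τ : Type*} [Fintype ρ] [Fintype τ] [DecidableEq ρ]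
    (f : Θ → Matrix ρ τ ℂ)
    {ι κ : ℕ → Type} [∀ n, Fintype (ι n)] [∀ n, Fintype (κ n)] [∀ n, DecidableEq (ι n)]
    (A : ∀ n, Matrix (ι n) (κ n) ℂ) : Prop :=
  ∀ F : ℝ → ℂ, Continuous F → HasCompactSupport F →
    Tendsto
      (fun n => ((min (Fintype.card (ι n)) (Fintype.card (κ n)) : ℕ) : ℂ)⁻¹ * svSum F (A n))
      atTop
      (𝓝 (((volume Ω).toReal : ℂ)⁻¹ *
        ∫ θ in Ω, ((min (Fintype.card ρ) (Fintype.card τ) : ℕ) : ℂ)⁻¹ * svSum F (f θ)))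

/-- `{A_n}_n ∼_λ f` : the matrix-sequence `A` is distributed as the matrix-valued
symbol `f : Ω → ℂ^{ρ×ρ}` in the sense of the eigenvalues (Weyl sense). -/
def DistributedEig {Θ : Type*} [MeasureSpace Θ] (Ω : Set Θ)
    {ρ : Type*} [Fintype ρ] [DecidableEq ρ]
    (f : Θ → Matrix ρ ρ ℂ)
    {ι : ℕ → Type} [∀ n, Fintype (ι n)] [∀ n, DecidableEq (ι n)]
    (A : ∀ n, Matrix (ι n) (ι n) ℂ) : Prop :=
  ∀ F : ℂ → ℂ, Continuous F → HasCompactSupport F →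
    Tendsto (fun n => ((Fintype.card (ι n) : ℕ) : ℂ)⁻¹ * eigSum F (A n)) atTop
      (𝓝 (((volume Ω).toReal : ℂ)⁻¹ *
        ∫ θ in Ω, ((Fintype.card ρ : ℕ) : ℂ)⁻¹ * eigSum F (f θ)))

/-- `{A_n}_n ∼_σ α I` (constant symbol `α I_s`, `α = 0` being the notion of a
zero-distributed matrix-sequence): the limit of the singular value averages is `F(α)`. -/
def DistributedSVConst (α : ℝ)
    {ι κ : ℕ → Type} [∀ n, Fintype (ι n)] [∀ n, Fintype (κ n)] [∀ n, DecidableEq (ι n)]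
    (A : ∀ n, Matrix (ι n) (κ n) ℂ) : Prop :=
  ∀ F : ℝ → ℂ, Continuous F → HasCompactSupport F →
    Tendsto
      (fun n => ((min (Fintype.card (ι n)) (Fintype.card (κ n)) : ℕ) : ℂ)⁻¹ * svSum F (A n))
      atTop (𝓝 (F α))

/-- `{A_n}_n ∼_λ α I` (constant symbol `α I_s`, `α` real): the limit of the eigenvalue
averages is `F(α)`. -/
def DistributedEigConst (α : ℝ)
    {ι : ℕ → Type} [∀ n, Fintype (ι n)] [∀ n, DecidableEq (ι n)]
    (A : ∀ n, Matrix (ι n) (ι n) ℂ) : Prop :=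
  ∀ F : ℂ → ℂ, Continuous F → HasCompactSupport F →
    Tendsto (fun n => ((Fintype.card (ι n) : ℕ) : ℂ)⁻¹ * eigSum F (A n)) atTop
      (𝓝 (F (α : ℂ)))

/-- The `k`-th Fourier coefficient (computed entrywise) of a matrix-valued function on
`[-π, π]`: `f̂_k = (1/2π) ∫_{-π}^{π} f(θ) e^{-ικθ} dθ`. -/
def fCoeff {ρ τ : Type*} (f : ℝ → Matrix ρ τ ℂ) (k : ℤ) : Matrix ρ τ ℂ :=
  Matrix.of fun a b =>
    ((2 * π : ℝ) : ℂ)⁻¹ *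
      ∫ θ in (-π : ℝ)..π, f θ a b * Complex.exp (-(Complex.I * (k : ℂ) * (θ : ℂ)))

/-- The (rectangular) block Toeplitz matrix `T_{n,n'}(f) = [f̂_{i-j}]`, of size
`sn × tn'` when `f` is `s × t` matrix-valued. -/
def blockToeplitz {ρ τ : Type*} (f : ℝ → Matrix ρ τ ℂ) (n n' : ℕ) :
    Matrix (Fin n × ρ) (Fin n' × τ) ℂ :=
  Matrix.of fun p q => fCoeff f (((p.1 : ℕ) : ℤ) - ((q.1 : ℕ) : ℤ)) p.2 q.2

/-!
The eigenvalues of the compression `Y = Pᴴ X P` of a Hermitian `X` by an isometry `P`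
interlace with those of `X` (Cauchy): for every `t`, `Y` has at most as many eigenvalues
`≥ t` (resp. `≤ t`) as `X`. Hence the number of eigenvalues of `Y` at distance `≥ ε` from `α`
is at most the corresponding number for `X`. For Hermitian sequences, `∼_λ α` means exactly
that this number is `o(size)`: one direction by testing against a tent function peaked at `α`,
the other by continuity of the test function at `α`. Since `d'_n ≥ γ d_n` eventually for some
`γ > 0`, `o(d_n)` is also `o(d'_n)`.
-/

open Finset

section Interlacing

variable {𝕜 : Type*} [RCLike 𝕜] {ι κ : Type*}

theorem Matrix.diagonal_ofReal_comp_affine [DecidableEq ι] (r : ι → ℝ) (a b : ℝ) :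
    diagonal (RCLike.ofReal ∘ fun i => a * r i + b : ι → 𝕜) =
      (a : 𝕜) • diagonal (RCLike.ofReal ∘ r) + (b : 𝕜) • 1 := by
  ext i j
  by_cases hij : i = j <;> simp [hij, RCLike.real_smul_eq_coe_mul]

theorem Matrix.exists_ne_zero_mulVec_eq_zero_on_of_card_lt [Fintype ι] [Fintype κ]
    {K : Type*} [Field K] (M : Matrix κ ι K) {S : Finset ι} {T : Finset κ} (hST : #T < #S) :
    ∃ x ≠ 0, (∀ j ∉ S, x j = 0) ∧ ∀ i ∈ T, (M *ᵥ x) i = 0 := by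
  let L : (S → K) →ₗ[K] (T → K) := LinearMap.funLeft K K (Subtype.val : T → κ) ∘ₗ
    M.mulVecLin ∘ₗ Function.ExtendByZero.linearMap K (Subtype.val : S → ι)
  obtain ⟨v, hv, hv0⟩ := (LinearMap.ker L).ne_bot_iff.mp <|
    LinearMap.ker_ne_bot_of_finrank_lt (by simpa using hST)
  refine ⟨Function.extend Subtype.val v 0, fun h => hv0 ?_, fun j hj => ?_, fun i hi => ?_⟩
  · ext j
    simpa using congrFun h j
  · exact Function.extend_apply' _ _ _ (by simpa using hj)
  · exact congrFun (LinearMap.mem_ker.mp hv) ⟨i, hi⟩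

theorem Matrix.star_dotProduct_diagonal_mulVec [Fintype ι] [DecidableEq ι] (r : ι → ℝ)
    (x : ι → 𝕜) :
    star x ⬝ᵥ (diagonal (RCLike.ofReal ∘ r) *ᵥ x) = ((∑ i, r i * ‖x i‖ ^ 2 : ℝ) : 𝕜) := by
  push_cast
  refine sum_congr rfl fun i _ => ?_
  simp only [mulVec_diagonal, Pi.star_apply, Function.comp_apply, RCLike.star_def,
    ← RCLike.conj_mul]
  ring

/-- If `#{m ≥ 0}` exceeded `#{l ≥ 0}`, some `x ≠ 0` supported on `{m ≥ 0}` would have `M x`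
supported on `{l < 0}`, making the quadratic form `∑ m |x|² = ∑ l |M x|²` both `≥ 0` and `< 0`. -/
theorem Matrix.card_nonneg_le_of_conjTranspose_mul_diagonal_mul [Fintype ι] [Fintype κ]
    [DecidableEq ι] [DecidableEq κ] {M : Matrix κ ι 𝕜} (hM : Mᴴ * M = 1) {l : κ → ℝ}
    {m : ι → ℝ} (h : Mᴴ * diagonal (RCLike.ofReal ∘ l : κ → 𝕜) * M = diagonal (RCLike.ofReal ∘ m)) :
    #{j | 0 ≤ m j} ≤ #{i | 0 ≤ l i} := by
  by_contra! hlt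
  obtain ⟨x, hx0, hxm, hyl⟩ := M.exists_ne_zero_mulVec_eq_zero_on_of_card_lt hlt
  set y := M *ᵥ x
  have hy0 : y ≠ 0 := fun hy => hx0 <| by
    have hxy : x = Mᴴ *ᵥ y := by simp [y, mulVec_mulVec, hM]
    simp [hxy, hy]
  have hform : ∑ j, m j * ‖x j‖ ^ 2 = ∑ i, l i * ‖y i‖ ^ 2 := by
    apply RCLike.ofReal_injective (K := 𝕜)
    rw [← star_dotProduct_diagonal_mulVec, ← star_dotProduct_diagonal_mulVec, ← h]
    simp [y, star_mulVec, dotProduct_mulVec, vecMul_vecMul, Matrix.mul_assoc]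
  have hx_nonneg : 0 ≤ ∑ j, m j * ‖x j‖ ^ 2 := by
    refine sum_nonneg fun j _ => ?_
    by_cases hj : 0 ≤ m j
    · positivity
    · simp [hxm j (by simpa using hj)]
  have hy_neg : ∑ i, l i * ‖y i‖ ^ 2 < 0 := by
    obtain ⟨i₀, hi₀⟩ := Function.ne_iff.mp hy0
    have hl_neg : ∀ i, y i ≠ 0 → l i < 0 := fun i hi =>
      not_le.mp fun hl => hi (hyl i (by simpa using hl))
    refine sum_neg' (fun i _ => ?_) ⟨i₀, mem_univ _, ?_⟩
    · by_cases hi : y i = 0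
      · simp [hi]
      · exact mul_nonpos_of_nonpos_of_nonneg (hl_neg i hi).le (by positivity)
    · exact mul_neg_of_neg_of_pos (hl_neg i₀ hi₀) (by positivity)
  linarith

theorem Matrix.conjTranspose_mul_diagonal_affine_mul [Fintype κ] [DecidableEq ι] [DecidableEq κ]
    {M : Matrix κ ι 𝕜} (hM : Mᴴ * M = 1) {l : κ → ℝ} {m : ι → ℝ}
    (h : Mᴴ * diagonal (RCLike.ofReal ∘ l : κ → 𝕜) * M = diagonal (RCLike.ofReal ∘ m))
    (a b : ℝ) :
    Mᴴ * diagonal (RCLike.ofReal ∘ fun i => a * l i + b : κ → 𝕜) * M =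
      diagonal (RCLike.ofReal ∘ fun j => a * m j + b) := by
  rw [diagonal_ofReal_comp_affine, diagonal_ofReal_comp_affine, Matrix.mul_add, Matrix.add_mul,
    Matrix.mul_smul, Matrix.smul_mul, Matrix.mul_smul, Matrix.smul_mul, h, Matrix.mul_one, hM]

theorem Matrix.IsHermitian.exists_isometry_conj_diagonal_eigenvalues [Fintype ι] [Fintype κ]
    [DecidableEq ι] [DecidableEq κ] {X : Matrix κ κ 𝕜} (hX : X.IsHermitian)
    {P : Matrix κ ι 𝕜} (hP : Pᴴ * P = 1) :
    ∃ M : Matrix κ ι 𝕜, Mᴴ * M = 1 ∧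
      Mᴴ * diagonal (RCLike.ofReal ∘ hX.eigenvalues : κ → 𝕜) * M =
        diagonal (RCLike.ofReal ∘ (isHermitian_conjTranspose_mul_mul P hX).eigenvalues) := by
  set U : Matrix κ κ 𝕜 := ↑hX.eigenvectorUnitary
  set V : Matrix ι ι 𝕜 := ↑(isHermitian_conjTranspose_mul_mul P hX).eigenvectorUnitary
  have hU : U * Uᴴ = 1 := Unitary.mul_star_self_of_mem hX.eigenvectorUnitary.2
  have hV : Vᴴ * V = 1 :=
    Unitary.star_mul_self_of_mem (isHermitian_conjTranspose_mul_mul P hX).eigenvectorUnitary.2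
  have hXU : X = U * diagonal (RCLike.ofReal ∘ hX.eigenvalues) * Uᴴ := by
    simpa [star_eq_conjTranspose] using hX.spectral_theorem
  have hYV := (isHermitian_conjTranspose_mul_mul P hX).conjStarAlgAut_star_eigenvectorUnitary
  refine ⟨Uᴴ * P * V, ?_, ?_⟩
  · simp only [conjTranspose_mul, conjTranspose_conjTranspose, Matrix.mul_assoc]
    simp [← Matrix.mul_assoc U, hU, ← Matrix.mul_assoc Pᴴ, hP, hV]
  · rw [← hYV]
    simp only [conjTranspose_mul, conjTranspose_conjTranspose, Unitary.conjStarAlgAut_star_apply,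
      hXU, Matrix.mul_assoc, star_eq_conjTranspose, V]

variable [Fintype ι] [Fintype κ] [DecidableEq ι] [DecidableEq κ] {X : Matrix κ κ 𝕜}
  {P : Matrix κ ι 𝕜}

theorem Matrix.IsHermitian.card_le_eigenvalues_conjTranspose_mul_mul (hX : X.IsHermitian)
    (hP : Pᴴ * P = 1) (t : ℝ) :
    #{j | t ≤ (isHermitian_conjTranspose_mul_mul P hX).eigenvalues j} ≤
      #{i | t ≤ hX.eigenvalues i} := by
  obtain ⟨M, hM, h⟩ := hX.exists_isometry_conj_diagonal_eigenvalues hP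
  simpa [← sub_eq_add_neg] using
    card_nonneg_le_of_conjTranspose_mul_diagonal_mul hM
      (conjTranspose_mul_diagonal_affine_mul hM h 1 (-t))

theorem Matrix.IsHermitian.card_eigenvalues_conjTranspose_mul_mul_le (hX : X.IsHermitian)
    (hP : Pᴴ * P = 1) (t : ℝ) :
    #{j | (isHermitian_conjTranspose_mul_mul P hX).eigenvalues j ≤ t} ≤
      #{i | hX.eigenvalues i ≤ t} := by
  obtain ⟨M, hM, h⟩ := hX.exists_isometry_conj_diagonal_eigenvalues hP
  simpa using
    card_nonneg_le_of_conjTranspose_mul_diagonal_mul hM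
      (conjTranspose_mul_diagonal_affine_mul hM h (-1) t)

theorem card_le_abs_sub_eq_add {ν : Type*} [Fintype ν] [DecidableEq ν] (s : ν → ℝ) (α : ℝ)
    {ε : ℝ} (hε : 0 < ε) :
    #{i | ε ≤ |s i - α|} = #{i | α + ε ≤ s i} + #{i | s i ≤ α - ε} := by
  rw [← card_union_of_disjoint (disjoint_filter.2 fun i _ h₁ h₂ => by linarith), ← filter_or]
  congr 1
  ext i
  simp only [mem_filter_univ, le_abs]
  constructor <;> rintro (h | h) <;> [left; right; left; right] <;> linarith

theorem Matrix.IsHermitian.card_far_eigenvalues_conjTranspose_mul_mul_le (hX : X.IsHermitian)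
    (hP : Pᴴ * P = 1) (α : ℝ) {ε : ℝ} (hε : 0 < ε) :
    #{j | ε ≤ |(isHermitian_conjTranspose_mul_mul P hX).eigenvalues j - α|} ≤
      #{i | ε ≤ |hX.eigenvalues i - α|} := by
  rw [card_le_abs_sub_eq_add _ _ hε, card_le_abs_sub_eq_add _ _ hε]
  exact add_le_add (hX.card_le_eigenvalues_conjTranspose_mul_mul hP _)
    (hX.card_eigenvalues_conjTranspose_mul_mul_le hP _)

end Interlacing

theorem Matrix.IsHermitian.eigSum_eq {ι : Type*} [Fintype ι] [DecidableEq ι]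
    {A : Matrix ι ι ℂ} (hA : A.IsHermitian) (F : ℂ → ℂ) :
    eigSum F A = ∑ i, F (hA.eigenvalues i) := by
  simp [eigSum, hA.roots_charpoly_eq_eigenvalues, Finset.sum_map_val]

def tent (c : ℂ) (ε : ℝ) (z : ℂ) : ℝ := max 0 (1 - ‖z - c‖ / ε)

theorem continuous_tent (c : ℂ) (ε : ℝ) : Continuous (tent c ε) := by
  unfold tent
  fun_prop

theorem tent_self (c : ℂ) (ε : ℝ) : tent c ε c = 1 := by simp [tent]

theorem tent_eq_zero {c z : ℂ} {ε : ℝ} (hε : 0 < ε) (hz : ε ≤ ‖z - c‖) : tent c ε z = 0 := by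
  rw [tent, max_eq_left]
  rwa [sub_nonpos, one_le_div hε]

theorem hasCompactSupport_tent (c : ℂ) {ε : ℝ} (hε : 0 < ε) : HasCompactSupport (tent c ε) :=
  HasCompactSupport.intro (isCompact_closedBall c ε) fun z hz =>
    tent_eq_zero hε (le_of_lt (by simpa [dist_eq_norm] using hz))

theorem card_far_div_card_le_one_sub {ι : Type*} [Fintype ι] (s : ι → ℝ) (α : ℝ) {ε : ℝ}
    (hε : 0 < ε) :
    (#{i | ε ≤ |s i - α|} : ℝ) / Fintype.card ι ≤
      1 - (Fintype.card ι : ℝ)⁻¹ * ∑ i, tent α ε (s i) := by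
  rcases isEmpty_or_nonempty ι with hι | hι
  · simp
  have hpoint : ∀ i, (if ε ≤ |s i - α| then 1 else 0 : ℝ) ≤ 1 - tent α ε (s i) := by
    intro i
    split_ifs with hi
    · rw [tent_eq_zero hε (by rwa [← Complex.ofReal_sub, Complex.norm_real])]
      norm_num
    · exact sub_nonneg.mpr (max_le zero_le_one (sub_le_self _ (by positivity)))
  have hcard : (0 : ℝ) < Fintype.card ι := by exact_mod_cast Fintype.card_pos
  rw [div_le_iff₀ hcard, sub_mul, one_mul, mul_right_comm, inv_mul_cancel₀ hcard.ne', one_mul,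
    natCast_card_filter]
  calc ∑ i, (if ε ≤ |s i - α| then 1 else 0 : ℝ) ≤ ∑ i, (1 - tent α ε (s i)) :=
        sum_le_sum fun i _ => hpoint i
    _ = Fintype.card ι - ∑ i, tent α ε (s i) := by simp [sum_sub_distrib]

theorem norm_inv_card_mul_sum_sub_le {ι : Type*} [Fintype ι] [Nonempty ι] (s : ι → ℝ)
    {F : ℂ → ℂ} {C η α ε : ℝ} (hC : ∀ z, ‖F z‖ ≤ C) (hη : 0 ≤ η)
    (hF : ∀ x : ℝ, |x - α| < ε → ‖F x - F α‖ ≤ η) :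
    ‖(Fintype.card ι : ℂ)⁻¹ * ∑ i, F (s i) - F α‖ ≤
      η + 2 * C * (#{i | ε ≤ |s i - α|} / Fintype.card ι) := by
  have hcard : (0 : ℝ) < Fintype.card ι := by exact_mod_cast Fintype.card_pos
  have hpoint : ∀ i, ‖F (s i) - F α‖ ≤ η + 2 * C * (if ε ≤ |s i - α| then 1 else 0) := by
    intro i
    split_ifs with hi
    · linarith [norm_sub_le (F (s i)) (F α), hC (s i), hC α]
    · simpa using hF (s i) (not_le.mp hi)
  calc ‖(Fintype.card ι : ℂ)⁻¹ * ∑ i, F (s i) - F α‖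
      = ‖(Fintype.card ι : ℂ)⁻¹ * ∑ i, (F (s i) - F α)‖ := by
        rw [sum_sub_distrib, sum_const, card_univ, nsmul_eq_mul, mul_sub,
          inv_mul_cancel_left₀ (by exact_mod_cast hcard.ne')]
    _ ≤ (Fintype.card ι : ℝ)⁻¹ * ∑ i, ‖F (s i) - F α‖ := by
        rw [norm_mul, norm_inv, Complex.norm_natCast]
        gcongr
        exact norm_sum_le _ _
    _ ≤ (Fintype.card ι : ℝ)⁻¹ * ∑ i, (η + 2 * C * (if ε ≤ |s i - α| then 1 else 0)) := by
        gcongr with i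
        exact hpoint i
    _ = η + 2 * C * (#{i | ε ≤ |s i - α|} / Fintype.card ι) := by
        rw [sum_add_distrib, ← mul_sum, ← natCast_card_filter]
        field_simp
        simp

section Distribution

variable {ι : ℕ → Type} [∀ n, Fintype (ι n)] [∀ n, DecidableEq (ι n)]
  {A : ∀ n, Matrix (ι n) (ι n) ℂ} {α : ℝ}

theorem DistributedEigConst.tendsto_card_far_div (h : DistributedEigConst α A)
    (hA : ∀ n, (A n).IsHermitian) {ε : ℝ} (hε : 0 < ε) :
    Tendsto (fun n => (#{i | ε ≤ |(hA n).eigenvalues i - α|} : ℝ) / Fintype.card (ι n))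
      atTop (𝓝 0) := by
  have htent := h (fun z => (tent α ε z : ℂ))
    (Complex.continuous_ofReal.comp (continuous_tent _ _))
    ((hasCompactSupport_tent _ hε).comp_left Complex.ofReal_zero)
  simp only [(hA _).eigSum_eq, tent_self, Complex.ofReal_one] at htent
  have havg : Tendsto
      (fun n => (Fintype.card (ι n) : ℝ)⁻¹ * ∑ i, tent α ε ((hA n).eigenvalues i))
      atTop (𝓝 1) := by
    refine (Complex.continuous_re.tendsto 1).comp htent |>.congr fun n => ?_
    simp [← Complex.ofReal_natCast, ← Complex.ofReal_inv, ← Complex.ofReal_sum]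
  refine squeeze_zero (fun n => by positivity) (fun n => card_far_div_card_le_one_sub _ _ hε) ?_
  simpa using (tendsto_const_nhds (x := (1 : ℝ))).sub havg

theorem distributedEigConst_of_tendsto_card_far_div (hA : ∀ n, (A n).IsHermitian)
    (hcard : ∀ᶠ n in atTop, Fintype.card (ι n) ≠ 0)
    (hfar : ∀ ε > 0, Tendsto (fun n => (#{i | ε ≤ |(hA n).eigenvalues i - α|} : ℝ) /
      Fintype.card (ι n)) atTop (𝓝 0)) :
    DistributedEigConst α A := by
  intro F hF hFc
  obtain ⟨C, hC⟩ := hF.bounded_above_of_compact_support hFc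
  have hC0 : 0 ≤ C := (norm_nonneg _).trans (hC 0)
  refine Metric.tendsto_nhds.mpr fun r hr => ?_
  obtain ⟨δ, hδ, hFδ⟩ := Metric.continuous_iff.mp hF α (r / 2) (half_pos hr)
  have hr' : 0 < r / (4 * (C + 1)) := by positivity
  filter_upwards [hcard, (hfar δ hδ).eventually (gt_mem_nhds hr')] with n hn hsmall
  have : Nonempty (ι n) := Fintype.card_pos_iff.mp (Nat.pos_of_ne_zero hn)
  rw [dist_eq_norm, (hA n).eigSum_eq]
  calc _ ≤ r / 2 + 2 * C * (#{i | δ ≤ |(hA n).eigenvalues i - α|} / Fintype.card (ι n)) :=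
        norm_inv_card_mul_sum_sub_le _ hC (by positivity) fun x hx => by
          rw [← dist_eq_norm]
          exact (hFδ x (by rwa [Complex.dist_eq, ← Complex.ofReal_sub, Complex.norm_real])).le
    _ ≤ r / 2 + 2 * C * (r / (4 * (C + 1))) := by gcongr
    _ < r := by
        field_simp
        nlinarith

end Distribution

theorem tendsto_div_of_liminf_div_pos {a : ℕ → ℝ} {d d' : ℕ → ℕ} (ha : ∀ n, 0 ≤ a n)
    (hlim : Tendsto (fun n => a n / d n) atTop (𝓝 0))
    (hpos : 0 < liminf (fun n => (d' n : ℝ) / d n) atTop) :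
    Tendsto (fun n => a n / d' n) atTop (𝓝 0) := by
  obtain ⟨γ, hγ0, hγ⟩ : ∃ γ > 0, ∀ᶠ n in atTop, γ < (d' n : ℝ) / d n :=
    ⟨_, half_pos hpos, eventually_lt_of_lt_liminf (half_lt_self hpos)
      (isBoundedUnder_of_eventually_ge (.of_forall fun n => by positivity))⟩
  refine squeeze_zero' (.of_forall fun n => div_nonneg (ha n) (by positivity))
    (hγ.mono fun n hn => ?_) (by simpa using hlim.div_const γ)
  have hd : (0 : ℝ) < d n := by
    by_contra! h
    rw [le_antisymm h (Nat.cast_nonneg _), div_zero] at hn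
    linarith
  rw [div_div]
  exact div_le_div_of_nonneg_left (ha n) (by positivity) (by linarith [(lt_div_iff₀ hd).mp hn])

theorem extradim_compression_eig_const_general
    (d d' : ℕ → ℕ)
    (X : ∀ n, Matrix (Fin (d n)) (Fin (d n)) ℂ)
    (hX : ∀ n, (X n).IsHermitian)
    (P : ∀ n, Matrix (Fin (d n)) (Fin (d' n)) ℂ)
    (hP : ∀ n, (P n)ᴴ * P n = 1)
    (hliminf : 0 < atTop.liminf fun n => (d' n : ℝ) / (d n : ℝ))
    (α : ℝ)
    (hXdist : DistributedEigConst α X) :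
    DistributedEigConst α (fun n => (P n)ᴴ * X n * P n) := by
  have hY n := isHermitian_conjTranspose_mul_mul (P n) (hX n)
  have hratio : ∀ᶠ n in atTop, 0 < (d' n : ℝ) / d n :=
    eventually_lt_of_lt_liminf hliminf
      (isBoundedUnder_of_eventually_ge (.of_forall fun n => by positivity))
  refine distributedEigConst_of_tendsto_card_far_div hY ?_ fun ε hε => ?_
  · filter_upwards [hratio] with n hn
    simp only [Fintype.card_fin]
    rintro h
    simp [h] at hn
  · have hXfar := hXdist.tendsto_card_far_div hX hε
    simp only [Fintype.card_fin] at hXfar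
    replace hXfar := tendsto_div_of_liminf_div_pos (fun n => Nat.cast_nonneg _) hXfar hliminf
    refine squeeze_zero (fun n => by positivity) (fun n => ?_) hXfar
    simp only [Fintype.card_fin]
    gcongr
    exact (hX n).card_far_eigenvalues_conjTranspose_mul_mul_le (hP n) α hε

/-- compression with ratio bounded away from zero, constant eigenvalue
symbol: if `X_n` is Hermitian of order `d_n → ∞`, `P_n` is a compression matrix,
`Y_n = P_n* X_n P_n`, `liminf d_n'/d_n > 0` and `{X_n}_n ∼_λ α I_s`, then
`{Y_n}_n ∼_λ α I_s`. -/
theorem extradim_compression_eig_const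
    (d d' : ℕ → ℕ)
    (hd : Tendsto d atTop atTop)
    (hlt : ∀ n, d' n < d n)
    (X : ∀ n, Matrix (Fin (d n)) (Fin (d n)) ℂ)
    (hX : ∀ n, (X n).IsHermitian)
    (P : ∀ n, Matrix (Fin (d n)) (Fin (d' n)) ℂ)
    (hP : ∀ n, (P n)ᴴ * P n = 1)
    (hliminf : 0 < atTop.liminf fun n => (d' n : ℝ) / (d n : ℝ))
    (α : ℝ)
    (hXdist : DistributedEigConst α X) :
    DistributedEigConst α (fun n => (P n)ᴴ * X n * P n) :=
  extradim_compression_eig_const_general d d' X hX P hP hliminf α hXdist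
end
end

section
/- Let f ∈ L¹([-π,π]; ℂ^{s×t}) and n > n'. Let X_{n,n'} = [f̂_{i−j}], i = n'+1,…,n, j = 1,…,n', be the lower part of T_{n,n'}(f), and let W_{n'} denote the n'×n' flip (anti-identity) matrix. Then X_{n,n'}(W_{n'} ⊗ I_t) is a submatrix of size s(n−n') × tn' of the block Hankel matrix H_{ñ}(f) with ñ = max{n−n', n'}; in particular, X_{n,n'} and a submatrix of H_{ñ}(f) share the same singular values. -/
open MeasureTheory Filter Topology Matrix
open scoped Real

noncomputable section

/-- The matrix `K_n^{(k)}` of order `n` whose `(i,j)` entry (1-based) equals `1` if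
`i + j = k + 1` and `0` otherwise. -/
def hankelK (n k : ℕ) : Matrix (Fin n) (Fin n) ℂ :=
  Matrix.of fun i j => if (i : ℕ) + 1 + ((j : ℕ) + 1) = k + 1 then 1 else 0

/-- The block Hankel matrix `H_n(f) = Σ_{k=1}^{2n-1} K_n^{(k)} ⊗ f̂_k`. -/
def blockHankel {ρ τ : Type*} (f : ℝ → Matrix ρ τ ℂ) (n : ℕ) :
    Matrix (Fin n × ρ) (Fin n × τ) ℂ :=
  ∑ k ∈ Finset.Icc 1 (2 * n - 1),
    Matrix.kroneckerMap (· * ·) (hankelK n k) (fCoeff f (k : ℤ))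

/-- The `μ × μ` flip (anti-identity) matrix `W_μ`, whose `(i,j)` entry (1-based) is `1`
if `i + j = μ + 1` and `0` otherwise. -/
def flipW (μ : ℕ) : Matrix (Fin μ) (Fin μ) ℂ :=
  Matrix.of fun i j => if (i : ℕ) + 1 + ((j : ℕ) + 1) = μ + 1 then 1 else 0

/-- The lower part `X_{n,n'}` (last `s(n-n')` rows) of the rectangular block Toeplitz
matrix `T_{n,n'}(f)` when `n > n'`. -/
def toeplitzLowerPart {ρ τ : Type*} (f : ℝ → Matrix ρ τ ℂ) (n n' : ℕ) :
    Matrix (Fin (n - n') × ρ) (Fin n' × τ) ℂ :=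
  Matrix.of fun p q =>
    fCoeff f (((n' : ℤ) + ((p.1 : ℕ) : ℤ)) - ((q.1 : ℕ) : ℤ)) p.2 q.2

lemma eig_congr {ι : Type*} [Fintype ι] [DecidableEq ι] {M N : Matrix ι ι ℂ}
    (h : M = N) (hM : M.IsHermitian) (hN : N.IsHermitian) :
    hM.eigenvalues = hN.eigenvalues := by subst h; rfl

lemma svSum_congr {m n₁ n₂ : Type*} [Fintype m] [Fintype n₁] [Fintype n₂] [DecidableEq m]
    (A : Matrix m n₁ ℂ) (B : Matrix m n₂ ℂ)
    (hAB : A * Aᴴ = B * Bᴴ) (hc : Fintype.card n₁ = Fintype.card n₂) (F : ℝ → ℂ) :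
    svSum F A = svSum F B := by
  unfold svSum
  rw [hc, eig_congr hAB]

lemma flipW_conjTranspose (μ : ℕ) : (flipW μ)ᴴ = flipW μ := by
  ext i j
  simp only [flipW, Matrix.conjTranspose_apply, Matrix.of_apply]
  rw [show (j : ℕ) + 1 + ((i : ℕ) + 1) = (i : ℕ) + 1 + ((j : ℕ) + 1) by ring]
  split <;> simp

lemma flipW_mul_flipW (μ : ℕ) : flipW μ * flipW μ = 1 := by
  ext i j
  rw [Matrix.mul_apply]
  rw [Finset.sum_eq_single i.rev]
  · simp only [flipW, Matrix.of_apply, Fin.val_rev, Matrix.one_apply]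
    have h1 : (i : ℕ) + 1 + (μ - ((i : ℕ) + 1) + 1) = μ + 1 := by omega
    rw [if_pos h1]
    have h2 : (μ - ((i : ℕ) + 1) + 1 + ((j : ℕ) + 1) = μ + 1) ↔ i = j := by
      rw [Fin.ext_iff]; omega
    by_cases hij : i = j
    · rw [if_pos (h2.mpr hij), if_pos hij]; ring
    · rw [if_neg (fun hh => hij (h2.mp hh)), if_neg hij]; ring
  · intro r _ hr
    simp only [flipW, Matrix.of_apply]
    have : ¬((i : ℕ) + 1 + ((r : ℕ) + 1) = μ + 1) := by
      intro hh
      exact hr (by rw [Fin.ext_iff, Fin.val_rev]; omega)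
    rw [if_neg this, zero_mul]
  · intro hh; exact absurd (Finset.mem_univ _) hh

/-- for `f ∈ L¹([-π,π]; ℂ^{s×t})` and `n > n'`, the block-flipped
lower part `X_{n,n'} (W_{n'} ⊗ I_t)` is a (row- and column-) submatrix of the block
Hankel matrix `H_ñ(f)` with `ñ = max{n-n', n'}`; in particular `X_{n,n'}` and this
submatrix of `H_ñ(f)` share the same singular values. -/
theorem toeplitz_lower_part_is_hankel_submatrix
    (s t : ℕ) (f : ℝ → Matrix (Fin s) (Fin t) ℂ)
    (hf : ∀ i j, IntervalIntegrable (fun θ => f θ i j) volume (-π) π)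
    (n n' : ℕ) (h : n' < n) :
    ∃ (rEmb : Fin (n - n') × Fin s → Fin (max (n - n') n') × Fin s)
      (cEmb : Fin n' × Fin t → Fin (max (n - n') n') × Fin t),
      Function.Injective rEmb ∧ Function.Injective cEmb ∧
      toeplitzLowerPart f n n' *
          Matrix.kroneckerMap (· * ·) (flipW n') (1 : Matrix (Fin t) (Fin t) ℂ) =
        (blockHankel f (max (n - n') n')).submatrix rEmb cEmb ∧
      ∀ F : ℝ → ℂ,
        svSum F (toeplitzLowerPart f n n') =
          svSum F ((blockHankel f (max (n - n') n')).submatrix rEmb cEmb) := by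

  have hn : 0 < n - n' := Nat.sub_pos_of_lt h
  have h1 : n - n' ≤ max (n - n') n' := le_max_left _ _
  have h2 : n' ≤ max (n - n') n' := le_max_right _ _
  have key : toeplitzLowerPart f n n' *
      Matrix.kroneckerMap (· * ·) (flipW n') (1 : Matrix (Fin t) (Fin t) ℂ) =
      (blockHankel f (max (n - n') n')).submatrix
        (fun pa => (Fin.castLE h1 pa.1, pa.2)) (fun qb => (Fin.castLE h2 qb.1, qb.2)) := by
    ext ⟨p, a⟩ ⟨q, b⟩
    have hq := q.isLt
    have hp := p.isLt
    rw [Matrix.mul_apply, Matrix.submatrix_apply]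
    rw [Finset.sum_eq_single ((q.rev : Fin n'), b)]
    · simp only [toeplitzLowerPart, Matrix.of_apply, Matrix.kroneckerMap_apply, flipW,
        Matrix.one_apply_eq, Fin.val_rev]
      rw [if_pos (by omega : (n' - ((q : ℕ) + 1)) + 1 + ((q : ℕ) + 1) = n' + 1)]
      rw [mul_one, mul_one]
      rw [blockHankel, Matrix.sum_apply]
      rw [Finset.sum_eq_single ((p : ℕ) + (q : ℕ) + 1)]
      · simp only [hankelK, Matrix.kroneckerMap_apply, Matrix.of_apply, Fin.coe_castLE]
        rw [if_pos (by omega : (p : ℕ) + 1 + ((q : ℕ) + 1) = (p : ℕ) + (q : ℕ) + 1 + 1),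
          one_mul]
        congr 1
        push_cast [Nat.cast_sub (by omega : (q : ℕ) + 1 ≤ n')]
        ring
      · intro k _ hk
        simp only [hankelK, Matrix.kroneckerMap_apply, Matrix.of_apply, Fin.coe_castLE]
        rw [if_neg (by omega), zero_mul]
      · intro hh
        exact absurd (Finset.mem_Icc.mpr ⟨by omega, by omega⟩) hh
    · rintro ⟨r, c⟩ - hne
      have hr : ((r, c).1 : ℕ) = (r : ℕ) := rfl
      simp only [Matrix.kroneckerMap_apply, flipW, Matrix.of_apply, Matrix.one_apply]
      by_cases hcb : c = b
      · subst hcb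
        have hrc : ¬((r : ℕ) + 1 + ((q : ℕ) + 1) = n' + 1) := by
          intro hh
          exact hne (Prod.ext (Fin.ext (by rw [Fin.val_rev]; omega)) rfl)
        rw [if_neg hrc]
        simp
      · rw [if_neg hcb]
        simp
    · intro hh
      exact absurd (Finset.mem_univ _) hh
  refine ⟨fun pa => (Fin.castLE h1 pa.1, pa.2),
          fun qb => (Fin.castLE h2 qb.1, qb.2), ?_, ?_, key, ?_⟩
  · intro x y hxy
    simp only [Prod.ext_iff, Fin.ext_iff, Fin.coe_castLE] at hxy ⊢
    exact hxy
  · intro x y hxy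
    simp only [Prod.ext_iff, Fin.ext_iff, Fin.coe_castLE] at hxy ⊢
    exact hxy
  · intro F
    refine svSum_congr _ _ ?_ rfl F
    have hWt : (flipW n')ᴴ = flipW n' := flipW_conjTranspose n'
    have hUt : (Matrix.kroneckerMap (· * ·) (flipW n') (1 : Matrix (Fin t) (Fin t) ℂ))ᴴ
        = Matrix.kroneckerMap (· * ·) (flipW n') (1 : Matrix (Fin t) (Fin t) ℂ) := by
      ext ⟨r, c⟩ ⟨w, b⟩
      simp only [Matrix.conjTranspose_apply, Matrix.kroneckerMap_apply, flipW,
        Matrix.of_apply, Matrix.one_apply, star_mul', apply_ite (star : ℂ → ℂ),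
        star_one, star_zero]
      congr 1
      · exact if_congr (by omega) rfl rfl
      · exact if_congr eq_comm rfl rfl
    have hU : Matrix.kroneckerMap (· * ·) (flipW n') (1 : Matrix (Fin t) (Fin t) ℂ) *
        (Matrix.kroneckerMap (· * ·) (flipW n') (1 : Matrix (Fin t) (Fin t) ℂ))ᴴ = 1 := by
      rw [hUt]
      have := (Matrix.mul_kronecker_mul (flipW n') (flipW n')
        (1 : Matrix (Fin t) (Fin t) ℂ) (1 : Matrix (Fin t) (Fin t) ℂ)).symm
      simp only [Matrix.kronecker] at this
      rw [show (Matrix.kroneckerMap (· * ·) (flipW n') (1 : Matrix (Fin t) (Fin t) ℂ) : Matrix _ _ ℂ) = Matrix.kroneckerMap HMul.hMul (flipW n') 1 from rfl, this,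
        flipW_mul_flipW, Matrix.one_mul]
      exact Matrix.one_kronecker_one
    rw [← key, Matrix.conjTranspose_mul, Matrix.mul_assoc,
      ← Matrix.mul_assoc (Matrix.kroneckerMap (· * ·) (flipW n') _), hU, Matrix.one_mul]


end
end
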